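/- arXiv:2010.15494 — 4 statements merged into one kernel-verified Lean document; each statement's English description precedes it below -/
import Mathlib

section
/- For the Gauss–Kuzmin measure dμ(x) = dx/((1+x) log 2) on [0,1] and complex s with 0 < Re(s) < 1, the Mellin-type integral ∫₀¹ ⌊1/x⌋^s dμ(x) equals (1/log 2)·( ζ(2−s) + H(s) ), where H(s) = ∑_{n≥1} n^s ( log(1 + 1/(n(n+2))) − 1/n² ) and ζ is the Riemann zeta function. -/
/-!
On the interval `(1/(n+2), 1/(n+1)]` the digit `⌊1/x⌋` is constantly `n + 1`, and the Gauss
measure of that interval is `log (1 + 1/((n+1)(n+3))) / log 2`. Hence the integral is the series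
`∑ (n+1)^s log (1 + 1/((n+1)(n+3))) / log 2`, which converges absolutely for `Re s < 1`, and this
absolute convergence is also what makes the integrand integrable. Splitting `1/(n+1)^2` off the
logarithm leaves the Dirichlet series of `ζ(2 - s)` plus a remainder that is
`O((n+1)^(Re s - 3))`.
-/

open Function MeasureTheory Set Real

section PiecewiseConstant

variable {X E ι : Type*} [MeasurableSpace X] {μ : Measure X} [NormedAddCommGroup E]
  [NormedSpace ℝ E] [CompleteSpace E] [Countable ι] {s : ι → Set X} {ρ : X → ℝ}
  {f : X → E} {c : ι → E}

theorem integral_iUnion_of_eqOn_smul_const (hs : ∀ i, MeasurableSet (s i))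
    (hd : Pairwise (Disjoint on s)) (hρ : ∀ i, IntegrableOn ρ (s i) μ)
    (hρ0 : ∀ i, ∀ x ∈ s i, 0 ≤ ρ x) (hf : ∀ i, EqOn f (fun x => ρ x • c i) (s i))
    (hsum : Summable fun i => (∫ x in s i, ρ x ∂μ) * ‖c i‖) :
    ∫ x in ⋃ i, s i, f x ∂μ = ∑' i, (∫ x in s i, ρ x ∂μ) • c i := by
  have hfi : ∀ i, IntegrableOn f (s i) μ := fun i =>
    IntegrableOn.congr_fun ((hρ i).smul_const (c i)) (hf i).symm (hs i)
  have hnorm : ∀ i, ∫ x in s i, ‖f x‖ ∂μ = (∫ x in s i, ρ x ∂μ) * ‖c i‖ := by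
    intro i
    rw [← integral_mul_const]
    refine setIntegral_congr_fun (hs i) fun x hx => ?_
    rw [hf i hx, norm_smul, norm_of_nonneg (hρ0 i x hx)]
  rw [integral_iUnion hs hd
    (integrableOn_iUnion_of_summable_integral_norm hfi (by simpa only [hnorm] using hsum))]
  refine tsum_congr fun i => ?_
  rw [setIntegral_congr_fun (hs i) (hf i), integral_smul_const]

end PiecewiseConstant

def digitInterval (n : ℕ) : Set ℝ := Ioc (1 / ((n : ℝ) + 2)) (1 / ((n : ℝ) + 1))

theorem measurableSet_digitInterval (n : ℕ) : MeasurableSet (digitInterval n) :=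
  measurableSet_Ioc

theorem digitInterval_subset_Ioc (n : ℕ) : digitInterval n ⊆ Ioc 0 1 := fun x hx =>
  ⟨(by positivity : (0 : ℝ) < 1 / ((n : ℝ) + 2)).trans hx.1,
    hx.2.trans (div_le_one_of_le₀ (by linarith [n.cast_nonneg (α := ℝ)]) (by positivity))⟩

theorem floor_one_div_eq_iff_mem_digitInterval {x : ℝ} (hx : 0 < x) (n : ℕ) :
    ⌊1 / x⌋ = (n : ℤ) + 1 ↔ x ∈ digitInterval n := by
  rw [Int.floor_eq_iff, digitInterval, mem_Ioc, and_comm]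
  push_cast
  rw [le_one_div (by positivity) hx, show (n : ℝ) + 1 + 1 = n + 2 by ring,
    one_div_lt hx (by positivity)]

theorem iUnion_digitInterval : ⋃ n, digitInterval n = Ioc 0 1 := by
  refine (iUnion_subset digitInterval_subset_Ioc).antisymm fun x ⟨hx0, hx1⟩ => ?_
  have h : 1 ≤ ⌊1 / x⌋ := Int.le_floor.2 (by exact_mod_cast one_le_one_div hx0 hx1)
  refine mem_iUnion.2
    ⟨(⌊1 / x⌋ - 1).toNat, (floor_one_div_eq_iff_mem_digitInterval hx0 _).1 (by omega)⟩

theorem pairwise_disjoint_digitInterval : Pairwise (Disjoint on digitInterval) := by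
  refine fun m n hmn => disjoint_left.2 fun x hm hn => hmn ?_
  have hx := (digitInterval_subset_Ioc m hm).1
  have := ((floor_one_div_eq_iff_mem_digitInterval hx m).2 hm).symm.trans
    ((floor_one_div_eq_iff_mem_digitInterval hx n).2 hn)
  omega

noncomputable def gaussDensity (x : ℝ) : ℝ := 1 / ((1 + x) * log 2)

theorem gaussDensity_nonneg {x : ℝ} (hx : -1 ≤ x) : 0 ≤ gaussDensity x :=
  one_div_nonneg.2 (mul_nonneg (by linarith) (log_nonneg one_le_two))

theorem integrableOn_gaussDensity_Ioc {a b : ℝ} (ha : -1 < a) :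
    IntegrableOn gaussDensity (Ioc a b) := by
  refine (ContinuousOn.integrableOn_Icc ?_).mono_set Ioc_subset_Icc_self
  exact continuousOn_const.div (by fun_prop) fun x hx =>
    mul_ne_zero (by linarith [hx.1]) (log_pos one_lt_two).ne'

theorem integrableOn_gaussDensity_digitInterval (n : ℕ) :
    IntegrableOn gaussDensity (digitInterval n) :=
  integrableOn_gaussDensity_Ioc (by linarith [one_div_pos.2 (by positivity : (0 : ℝ) < n + 2)])

theorem integral_gaussDensity_Ioc {a b : ℝ} (ha : -1 < a) (hab : a ≤ b) :
    ∫ x in Ioc a b, gaussDensity x = log ((1 + b) / (1 + a)) / log 2 := by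
  have h : ∀ x, gaussDensity x = 1 / (1 + x) / log 2 := fun x => by rw [gaussDensity, div_div]
  simp_rw [← intervalIntegral.integral_of_le hab, h, intervalIntegral.integral_div]
  rw [intervalIntegral.integral_comp_add_left (fun x => 1 / x) 1,
    integral_one_div (notMem_uIcc_of_lt (by linarith) (by linarith))]

theorem integral_gaussDensity_digitInterval (n : ℕ) :
    ∫ x in digitInterval n, gaussDensity x =
      log (1 + 1 / (((n : ℝ) + 1) * ((n : ℝ) + 3))) / log 2 := by
  have h0 : (0 : ℝ) < 1 / ((n : ℝ) + 2) := by positivity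
  rw [digitInterval, integral_gaussDensity_Ioc (by linarith)
    (one_div_le_one_div_of_le (by positivity) (by linarith))]
  congr 2
  field_simp
  ring

theorem abs_log_one_add_one_div_mul_add_two_sub_le {c : ℝ} (hc : 0 < c) :
    |log (1 + 1 / (c * (c + 2))) - 1 / c ^ 2| ≤ 2 / c ^ 3 := by
  have hupper : log (1 + 1 / (c * (c + 2))) ≤ 1 / c ^ 2 := calc
    log (1 + 1 / (c * (c + 2))) ≤ 1 / (c * (c + 2)) := by
      linarith [log_le_sub_one_of_pos (by positivity : 0 < 1 + 1 / (c * (c + 2)))]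
    _ ≤ 1 / c ^ 2 := by gcongr; nlinarith
  -- `1 + 1/(c(c+2)) = (c+1)^2/(c(c+2))`, whose inverse is `1 - 1/(c+1)^2`
  have hlower : 1 / (c + 1) ^ 2 ≤ log (1 + 1 / (c * (c + 2))) := by
    convert one_sub_inv_le_log_of_pos (by positivity : 0 < 1 + 1 / (c * (c + 2))) using 1
    field_simp
    ring
  have hgap : 1 / c ^ 2 - 1 / (c + 1) ^ 2 ≤ 2 / c ^ 3 := by
    rw [div_sub_div _ _ (by positivity) (by positivity),
      div_le_div_iff₀ (by positivity) (by positivity)]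
    nlinarith [pow_pos hc 2, pow_pos hc 3]
  rw [abs_sub_comm, abs_of_nonneg (by linarith)]
  linarith

theorem summable_one_div_nat_add_one_cpow {p : ℂ} (hp : 1 < p.re) :
    Summable fun n : ℕ => 1 / ((n : ℂ) + 1) ^ p := by
  simpa using (summable_nat_add_iff 1).2 (Complex.summable_one_div_nat_cpow.2 hp)

theorem summable_nat_add_one_rpow {p : ℝ} (hp : p < -1) :
    Summable fun n : ℕ => ((n : ℝ) + 1) ^ p := by
  simpa using (summable_nat_add_iff 1).2 (Real.summable_nat_rpow.2 hp)

theorem norm_natCast_add_one_cpow (n : ℕ) (s : ℂ) :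
    ‖((n : ℂ) + 1) ^ s‖ = ((n : ℝ) + 1) ^ s.re := by
  exact_mod_cast Complex.norm_natCast_cpow_of_pos n.succ_pos s

theorem summable_cpow_mul_log_one_add_sub {s : ℂ} (hs : s.re < 2) :
    Summable fun n : ℕ => ((n : ℂ) + 1) ^ s *
      ((log (1 + 1 / (((n : ℝ) + 1) * ((n : ℝ) + 3))) : ℂ) - 1 / ((n : ℂ) + 1) ^ 2) := by
  refine .of_norm_bounded
    ((summable_nat_add_one_rpow (by linarith : s.re - 3 < -1)).mul_left 2) fun n => ?_
  have hc : (0 : ℝ) < n + 1 := by positivity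
  have hlog :
      ‖(log (1 + 1 / (((n : ℝ) + 1) * ((n : ℝ) + 3))) : ℂ) - 1 / ((n : ℂ) + 1) ^ 2‖ ≤
        2 / ((n : ℝ) + 1) ^ 3 := by
    have h := abs_log_one_add_one_div_mul_add_two_sub_le hc
    rw [show (n : ℝ) + 1 + 2 = n + 3 by ring, ← norm_eq_abs, ← Complex.norm_real] at h
    convert h using 2
    push_cast
    rfl
  calc _ ≤ ((n : ℝ) + 1) ^ s.re * (2 / ((n : ℝ) + 1) ^ 3) := by
        rw [norm_mul, norm_natCast_add_one_cpow]
        gcongr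
    _ = 2 * ((n : ℝ) + 1) ^ (s.re - 3) := by
        rw [rpow_sub hc, rpow_ofNat]
        ring

theorem cpow_mul_eq_one_div_cpow_add {z : ℂ} (hz : z ≠ 0) (s L : ℂ) :
    z ^ s * L = 1 / z ^ (2 - s) + z ^ s * (L - 1 / z ^ 2) := by
  have : z ^ s ≠ 0 := Complex.cpow_ne_zero_iff.2 (Or.inl hz)
  rw [Complex.cpow_sub _ _ hz, Complex.cpow_ofNat]
  field_simp
  ring

theorem hasSum_cpow_mul_log_one_add {s : ℂ} (hs : s.re < 1) :
    HasSum (fun n : ℕ => ((n : ℂ) + 1) ^ s *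
        (log (1 + 1 / (((n : ℝ) + 1) * ((n : ℝ) + 3))) : ℂ))
      (riemannZeta (2 - s) + ∑' n : ℕ, ((n : ℂ) + 1) ^ s *
        ((log (1 + 1 / (((n : ℝ) + 1) * ((n : ℝ) + 3))) : ℂ) - 1 / ((n : ℂ) + 1) ^ 2)) := by
  have hre : 1 < (2 - s).re := by simp only [Complex.sub_re, Complex.re_ofNat]; linarith
  rw [zeta_eq_tsum_one_div_nat_add_one_cpow hre]
  refine ((summable_one_div_nat_add_one_cpow hre).hasSum.add
    (summable_cpow_mul_log_one_add_sub (by linarith)).hasSum).congr_fun fun n => ?_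
  exact cpow_mul_eq_one_div_cpow_add (Nat.cast_add_one_ne_zero n) s _

theorem stmt_9_general (s : ℂ) (h1 : s.re < 1) :
    ∫ x in Set.Ioo (0:ℝ) 1,
        ((⌊1 / x⌋ : ℂ) ^ s * ((1 / ((1 + x) * Real.log 2) : ℝ) : ℂ)) =
      (1 / (Real.log 2 : ℂ)) *
        (riemannZeta (2 - s) +
          ∑' n : ℕ, ((n : ℂ) + 1) ^ s *
            ((Real.log (1 + 1 / (((n : ℝ) + 1) * ((n : ℝ) + 3))) : ℂ) -
              1 / ((n : ℂ) + 1) ^ 2)) := by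
  have hconst : ∀ n : ℕ,
      EqOn (fun x : ℝ => (⌊1 / x⌋ : ℂ) ^ s * ((1 / ((1 + x) * log 2) : ℝ) : ℂ))
        (fun x => gaussDensity x • ((n : ℂ) + 1) ^ s) (digitInterval n) := fun n x hx => by
    dsimp only
    rw [(floor_one_div_eq_iff_mem_digitInterval (digitInterval_subset_Ioc n hx).1 n).2 hx,
      Complex.real_smul, gaussDensity, mul_comm]
    push_cast
    rfl
  have hseries := hasSum_cpow_mul_log_one_add h1
  rw [← integral_Ioc_eq_integral_Ioo, ← iUnion_digitInterval,
    integral_iUnion_of_eqOn_smul_const measurableSet_digitInterval pairwise_disjoint_digitInterval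
      integrableOn_gaussDensity_digitInterval
      (fun n _ hx => gaussDensity_nonneg (by linarith [(digitInterval_subset_Ioc n hx).1])) hconst]
  · simp_rw [integral_gaussDensity_digitInterval, Complex.real_smul, ← hseries.tsum_eq,
      ← tsum_mul_left]
    refine tsum_congr fun n => ?_
    push_cast
    ring
  · simp_rw [integral_gaussDensity_digitInterval]
    refine ((summable_norm_iff.2 hseries.summable).div_const (log 2)).congr fun n => ?_
    rw [norm_mul, Complex.norm_real, norm_of_nonneg (log_nonneg ?_)]
    · ring
    · simp only [le_add_iff_nonneg_right]
      positivity

theorem stmt_9 (s : ℂ) (h0 : 0 < s.re) (h1 : s.re < 1) :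
    ∫ x in Set.Ioo (0:ℝ) 1,
        ((⌊1 / x⌋ : ℂ) ^ s * ((1 / ((1 + x) * Real.log 2) : ℝ) : ℂ)) =
      (1 / (Real.log 2 : ℂ)) *
        (riemannZeta (2 - s) +
          ∑' n : ℕ, ((n : ℂ) + 1) ^ s *
            ((Real.log (1 + 1 / (((n : ℝ) + 1) * ((n : ℝ) + 3))) : ℂ) -
              1 / ((n : ℂ) + 1) ^ 2)) :=
  stmt_9_general s h1
end

section
/- There exists a constant C such that for all t ∈ (0, 1/2), ∫₀¹ |e^{i t ⌊1/x⌋} − 1| dx ≤ C · t · |log t|. -/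
/-!
Since `|e^{iu} - 1| ≤ min (u, 2) ≤ 2 u^γ` for `u ≥ 0` and `γ ∈ [0, 1]`, and `t ⌊1/x⌋ ≤ t / x`,
the integral is at most `2 t^γ ∫₀¹ x^{-γ} dx = 2 t^γ / (1 - γ)`. Choosing `1 - γ = 1 / (1 + |log t|)`
(not `1 / |log t|`, which would make `γ < 0` for `t > 1/e`) makes `t^γ ≤ e t`, so the integral is at most `2 e t (1 + |log t|)`, and `1 + |log t| ≲ |log t|`
for `t < 1/2`.
-/

open MeasureTheory Real Set

lemma Complex.norm_exp_I_mul_ofReal_sub_one_le_two_mul_rpow {u γ : ℝ} (hu : 0 ≤ u)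
    (hγ₀ : 0 ≤ γ) (hγ₁ : γ ≤ 1) : ‖exp (I * u) - 1‖ ≤ 2 * u ^ γ := by
  rcases le_or_gt u 1 with hu₁ | hu₁
  · have : u ^ (1 : ℝ) ≤ u ^ γ := rpow_le_rpow_of_exponent_ge' hu hu₁ hγ₀ hγ₁
    calc ‖exp (I * u) - 1‖ ≤ u := by
          simpa [abs_of_nonneg hu] using norm_exp_I_mul_ofReal_sub_one_le (x := u)
      _ ≤ 2 * u ^ γ := by rw [rpow_one] at this; linarith [rpow_nonneg hu γ]
  · calc ‖exp (I * u) - 1‖ ≤ ‖exp (I * u)‖ + ‖(1 : ℂ)‖ := norm_sub_le _ _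
      _ = 2 := by rw [mul_comm, norm_exp_ofReal_mul_I]; norm_num
      _ ≤ 2 * u ^ γ := by linarith [one_le_rpow hu₁.le hγ₀]

lemma norm_exp_I_mul_floor_one_div_sub_one_le {t x γ : ℝ} (ht : 0 ≤ t) (hx : 0 < x)
    (hγ₀ : 0 ≤ γ) (hγ₁ : γ ≤ 1) :
    ‖Complex.exp (Complex.I * t * ⌊1 / x⌋) - 1‖ ≤ 2 * t ^ γ * x ^ (-γ) := by
  have hfloor : (0 : ℝ) ≤ ⌊1 / x⌋ := by exact_mod_cast Int.floor_nonneg.2 (by positivity)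
  have hle : t * ⌊1 / x⌋ ≤ t / x := by
    rw [← mul_one_div t x]
    exact mul_le_mul_of_nonneg_left (Int.floor_le _) ht
  calc ‖Complex.exp (Complex.I * t * ⌊1 / x⌋) - 1‖
        = ‖Complex.exp (Complex.I * ↑(t * ⌊1 / x⌋)) - 1‖ := by push_cast; ring_nf
    _ ≤ 2 * (t * ⌊1 / x⌋) ^ γ :=
        Complex.norm_exp_I_mul_ofReal_sub_one_le_two_mul_rpow (mul_nonneg ht hfloor) hγ₀ hγ₁
    _ ≤ 2 * (t / x) ^ γ := by gcongr
    _ = 2 * t ^ γ * x ^ (-γ) := by rw [div_rpow ht hx.le, rpow_neg hx.le]; ring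

lemma integral_Ioo_zero_one_rpow {s : ℝ} (hs : -1 < s) :
    ∫ x in Ioo (0 : ℝ) 1, x ^ s = 1 / (s + 1) := by
  rw [← integral_Ioc_eq_integral_Ioo, ← intervalIntegral.integral_of_le zero_le_one,
    integral_rpow (Or.inl hs), one_rpow, zero_rpow (by linarith), sub_zero]

lemma integral_norm_exp_I_mul_floor_one_div_sub_one_le {t γ : ℝ} (ht : 0 ≤ t)
    (hγ₀ : 0 ≤ γ) (hγ₁ : γ < 1) :
    ∫ x in Ioo (0 : ℝ) 1, ‖Complex.exp (Complex.I * t * ⌊1 / x⌋) - 1‖ ≤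
      2 * t ^ γ / (1 - γ) := by
  have hs : -1 < -γ := by linarith
  calc ∫ x in Ioo (0 : ℝ) 1, ‖Complex.exp (Complex.I * t * ⌊1 / x⌋) - 1‖
        ≤ ∫ x in Ioo (0 : ℝ) 1, 2 * t ^ γ * x ^ (-γ) := by
          refine integral_mono_of_nonneg (.of_forall fun _ ↦ norm_nonneg _)
            (((intervalIntegral.integrableOn_Ioo_rpow_iff one_pos).2 hs).const_mul _) ?_
          filter_upwards [ae_restrict_mem measurableSet_Ioo] with x hx
          exact norm_exp_I_mul_floor_one_div_sub_one_le ht hx.1 hγ₀ hγ₁.le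
    _ = 2 * t ^ γ / (1 - γ) := by
          rw [integral_const_mul, integral_Ioo_zero_one_rpow hs, neg_add_eq_sub]; ring

lemma rpow_one_sub_inv_one_add_abs_log_le {t : ℝ} (ht : 0 < t) :
    t ^ (1 - (1 + |log t|)⁻¹) ≤ exp 1 * t := by
  have hpos : 0 < 1 + |log t| := by positivity
  have hexp : log t * -(1 + |log t|)⁻¹ ≤ 1 := by
    rw [mul_neg, neg_le, ← div_eq_mul_inv, le_div_iff₀ hpos]
    linarith [neg_abs_le (log t)]
  calc t ^ (1 - (1 + |log t|)⁻¹) = t * exp (log t * -(1 + |log t|)⁻¹) := by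
        rw [sub_eq_add_neg, rpow_add ht, rpow_one, rpow_def_of_pos ht]
    _ ≤ t * exp 1 := by gcongr
    _ = exp 1 * t := mul_comm _ _

theorem stmt_12 : ∃ C : ℝ, ∀ t ∈ Set.Ioo (0:ℝ) (1/2),
    (∫ x in Set.Ioo (0:ℝ) 1,
        ‖Complex.exp (Complex.I * (t : ℂ) * (⌊1 / x⌋ : ℂ)) - 1‖) ≤
      C * t * |Real.log t| := by
  refine ⟨2 * exp 1 * (1 + (log 2)⁻¹), fun t ⟨ht₀, ht₂⟩ ↦ ?_⟩
  set L := |log t|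
  have hlog2 : 0 < log 2 := log_pos one_lt_two
  have hL : log 2 ≤ L := by
    have : log 2 ≤ log t⁻¹ := log_le_log two_pos (by rw [le_inv_comm₀ two_pos ht₀]; linarith)
    linarith [log_inv t, neg_le_abs (log t)]
  have hδ : 0 < (1 + L)⁻¹ := by positivity
  have hδ₁ : (1 + L)⁻¹ ≤ 1 := inv_le_one_of_one_le₀ (by linarith)
  calc ∫ x in Ioo (0 : ℝ) 1, ‖Complex.exp (Complex.I * t * ⌊1 / x⌋) - 1‖
        ≤ 2 * t ^ (1 - (1 + L)⁻¹) / (1 - (1 - (1 + L)⁻¹)) :=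
          integral_norm_exp_I_mul_floor_one_div_sub_one_le ht₀.le (by linarith) (by linarith)
    _ = 2 * t ^ (1 - (1 + L)⁻¹) * (1 + L) := by rw [sub_sub_cancel, div_inv_eq_mul]
    _ ≤ 2 * (exp 1 * t) * (1 + L) := by gcongr; exact rpow_one_sub_inv_one_add_abs_log_le ht₀
    _ ≤ 2 * (exp 1 * t) * ((1 + (log 2)⁻¹) * L) := by
          gcongr
          have : 1 ≤ (log 2)⁻¹ * L := by rw [← div_eq_inv_mul, le_div_iff₀ hlog2]; linarith
          linarith
    _ = 2 * exp 1 * (1 + (log 2)⁻¹) * t * L := by ring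
end

section
/- There exists a constant C such that for all t ∈ (0, 1/2), ∑_{n≥1} |e^{itn} − 1| / (n(n+1)) ≤ C · t · |log t|. -/
/-!
Split the series at `N = ⌊1/t⌋₊`. For `n < N` use `‖e^{iθ} - 1‖ ≤ |θ|`: the head is at most
`t` times the harmonic number `H_N ≤ 1 + log (1/t)`. For `n ≥ N` use `‖e^{iθ} - 1‖ ≤ 2`: the tail
telescopes to `2 / (N + 1) ≤ 2t`. Finally `t (3 + |log t|) ≤ 7 t |log t|` because
`|log t| ≥ log 2 > 1/2` on `(0, 1/2)`.
-/

open Finset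

lemma sum_range_one_div_succ_mul_add_two (n : ℕ) :
    ∑ i ∈ range n, 1 / (((i : ℝ) + 1) * ((i : ℝ) + 2)) = 1 - 1 / ((n : ℝ) + 1) := by
  induction n with
  | zero => norm_num
  | succ n ih =>
    rw [sum_range_succ, ih]
    push_cast
    field_simp
    ring

lemma hasSum_one_div_succ_mul_add_two :
    HasSum (fun n : ℕ => 1 / (((n : ℝ) + 1) * ((n : ℝ) + 2))) 1 := by
  rw [hasSum_iff_tendsto_nat_of_nonneg (fun n => by positivity)]
  simp_rw [sum_range_one_div_succ_mul_add_two]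
  simpa using tendsto_const_nhds.sub (tendsto_one_div_add_atTop_nhds_zero_nat (𝕜 := ℝ))

lemma tsum_one_div_succ_mul_add_two_nat_add (N : ℕ) :
    ∑' n : ℕ, 1 / ((((n + N : ℕ) : ℝ) + 1) * (((n + N : ℕ) : ℝ) + 2)) = 1 / ((N : ℝ) + 1) := by
  have h := hasSum_one_div_succ_mul_add_two.summable.sum_add_tsum_nat_add N
  rw [hasSum_one_div_succ_mul_add_two.tsum_eq, sum_range_one_div_succ_mul_add_two] at h
  linarith

section WeightedSum

variable {a : ℕ → ℝ} {t : ℝ}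

lemma sum_range_div_succ_mul_add_two_le_mul_harmonic (ht : 0 < t)
    (hat : ∀ n, a n ≤ t * ((n : ℝ) + 1)) (N : ℕ) :
    ∑ n ∈ range N, a n / (((n : ℝ) + 1) * ((n : ℝ) + 2)) ≤ t * harmonic N := by
  rw [harmonic, Rat.cast_sum, mul_sum]
  refine sum_le_sum fun n _ => ?_
  calc a n / (((n : ℝ) + 1) * ((n : ℝ) + 2))
      ≤ t * ((n : ℝ) + 1) / (((n : ℝ) + 1) * ((n : ℝ) + 2)) := by gcongr; exact hat n
    _ = t / ((n : ℝ) + 2) := by field_simp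
    _ ≤ t / ((n : ℝ) + 1) := by gcongr; linarith
    _ = t * ((n + 1 : ℕ) : ℚ)⁻¹ := by push_cast; ring

lemma tsum_div_succ_mul_add_two_nat_add_le (ha0 : ∀ n, 0 ≤ a n) (ha2 : ∀ n, a n ≤ 2)
    (N : ℕ) :
    ∑' n : ℕ, a (n + N) / ((((n + N : ℕ) : ℝ) + 1) * (((n + N : ℕ) : ℝ) + 2)) ≤
      2 / ((N : ℝ) + 1) := by
  have hw := (summable_nat_add_iff N).mpr hasSum_one_div_succ_mul_add_two.summable
  have hbound : ∀ n : ℕ, a (n + N) / ((((n + N : ℕ) : ℝ) + 1) * (((n + N : ℕ) : ℝ) + 2)) ≤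
      2 * (1 / ((((n + N : ℕ) : ℝ) + 1) * (((n + N : ℕ) : ℝ) + 2))) := fun n => by
    rw [mul_one_div]; gcongr; exact ha2 _
  calc _ ≤ ∑' n : ℕ, 2 * (1 / ((((n + N : ℕ) : ℝ) + 1) * (((n + N : ℕ) : ℝ) + 2))) :=
        (hw.mul_left 2).of_nonneg_of_le (fun n => by have := ha0 (n + N); positivity) hbound
          |>.tsum_le_tsum hbound (hw.mul_left 2)
    _ = 2 / ((N : ℝ) + 1) := by
      rw [tsum_mul_left, tsum_one_div_succ_mul_add_two_nat_add, mul_one_div]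

theorem tsum_div_succ_mul_add_two_le (ht0 : 0 < t) (ht1 : t ≤ 1)
    (ha0 : ∀ n, 0 ≤ a n) (ha2 : ∀ n, a n ≤ 2) (hat : ∀ n, a n ≤ t * ((n : ℝ) + 1)) :
    ∑' n : ℕ, a n / (((n : ℝ) + 1) * ((n : ℝ) + 2)) ≤ t * (3 - Real.log t) := by
  have hsum : Summable fun n : ℕ => a n / (((n : ℝ) + 1) * ((n : ℝ) + 2)) :=
    (hasSum_one_div_succ_mul_add_two.summable.mul_left 2).of_nonneg_of_le
      (fun n => by have := ha0 n; positivity)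
      (fun n => by rw [mul_one_div]; gcongr; exact ha2 n)
  set N := ⌊1 / t⌋₊
  have hN : 1 ≤ N := Nat.one_le_floor_iff _ |>.mpr (one_le_one_div ht0 ht1)
  have hlogN : Real.log N ≤ -Real.log t := by
    rw [← Real.log_inv, ← one_div]
    exact Real.log_le_log (by exact_mod_cast hN) (Nat.floor_le (by positivity))
  have htail : 2 / ((N : ℝ) + 1) ≤ 2 * t := by
    rw [div_le_iff₀ (by positivity)]
    have := (div_lt_iff₀ ht0).mp (Nat.lt_floor_add_one (1 / t))
    nlinarith
  calc _ = _ := (hsum.sum_add_tsum_nat_add N).symm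
    _ ≤ t * harmonic N + 2 / ((N : ℝ) + 1) :=
      add_le_add (sum_range_div_succ_mul_add_two_le_mul_harmonic ht0 hat N)
        (tsum_div_succ_mul_add_two_nat_add_le ha0 ha2 N)
    _ ≤ t * (1 - Real.log t) + 2 * t := by
      gcongr
      linarith [harmonic_le_one_add_log N]
    _ = t * (3 - Real.log t) := by ring

end WeightedSum

lemma norm_exp_I_mul_ofReal_sub_one_le_two (x : ℝ) :
    ‖Complex.exp (Complex.I * x) - 1‖ ≤ 2 :=
  (norm_sub_le _ _).trans (by rw [Complex.norm_exp_I_mul_ofReal, norm_one]; norm_num)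

theorem stmt_13 : ∃ C : ℝ, ∀ t ∈ Set.Ioo (0:ℝ) (1/2),
    (∑' n : ℕ,
        ‖Complex.exp (Complex.I * (t : ℂ) * ((n : ℂ) + 1)) - 1‖ /
          (((n : ℝ) + 1) * ((n : ℝ) + 2))) ≤
      C * t * |Real.log t| := by
  refine ⟨7, fun t ⟨ht0, ht2⟩ => ?_⟩
  have harg (n : ℕ) :
      Complex.I * (t : ℂ) * ((n : ℂ) + 1) = Complex.I * ((t * ((n : ℝ) + 1) : ℝ) : ℂ) := by
    push_cast; ring
  have hbound := tsum_div_succ_mul_add_two_le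
    (a := fun n => ‖Complex.exp (Complex.I * (t : ℂ) * ((n : ℂ) + 1)) - 1‖) ht0 (by linarith)
    (fun n => norm_nonneg _)
    (fun n => by rw [harg]; exact norm_exp_I_mul_ofReal_sub_one_le_two _)
    (fun n => by
      rw [harg]
      exact Real.norm_exp_I_mul_ofReal_sub_one_le.trans_eq (Real.norm_of_nonneg (by positivity)))
  have hlog : Real.log t < -(1 / 2) := by
    have := Real.log_lt_log ht0 ht2
    rw [one_div, Real.log_inv] at this
    linarith [Real.log_two_gt_d9]
  rw [abs_of_neg (by linarith)]
  nlinarith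
end

section
/- Let μ be a probability measure on [0,1] with density f ∈ C¹([0,1]) with respect to Lebesgue measure, and let a ≠ 0, β = 1, λ = 0, i.e. φ(x) = a/x on (0,1]. Then as t → 0⁺, ∫₀¹ (e^{itφ(x)} − 1) dμ(x) = c_* t |log t| + O_ε(t |log t|^ε) for any ε ∈ (0,1), where c_* = −f(0) |a| e^{−πi sgn(a)/2}. -/
/-!
Put b = t a, so the integrand is (e^{ib/x} - 1) f(x). Since f is Lipschitz and
|e^{ib/x} - 1| ≤ |b|/x, replacing f(x) by f(0) costs O(|b|). For the constant part split
[0, 1] at |b|: on (0, |b|) the kernel is bounded by 2; on (|b|, 1) the phase b/x has modulus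
at most 1, so the kernel is i b/x up to b²/x², whose integral is O(|b|), while
∫_{|b|}^1 i b/x dx = -i b log|b| = i a t |log t| - i a t log|a|. This gives the expansion with
error O(t), and |a| e^{-iπ sgn(a)/2} = -i a identifies the constant.
-/

open MeasureTheory Set

noncomputable def oscKernel (b x : ℝ) : ℂ := Complex.exp (Complex.I * ((b / x : ℝ) : ℂ)) - 1

lemma measurable_oscKernel (b : ℝ) : Measurable (oscKernel b) := by
  unfold oscKernel; fun_prop

lemma norm_oscKernel_le_two (b x : ℝ) : ‖oscKernel b x‖ ≤ 2 := by
  rw [oscKernel, Complex.norm_exp_I_mul_ofReal_sub_one, norm_mul, Real.norm_two]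
  simpa using Real.abs_sin_le_one (b / x / 2)

lemma norm_oscKernel_le (b x : ℝ) : ‖oscKernel b x‖ ≤ |b| / |x| := by
  simpa [oscKernel, abs_div] using Real.norm_exp_I_mul_ofReal_sub_one_le (x := b / x)

lemma norm_oscKernel_sub_le {b x : ℝ} (h : |b| ≤ |x|) :
    ‖oscKernel b x - Complex.I * ((b / x : ℝ) : ℂ)‖ ≤ b ^ 2 / x ^ 2 := by
  have hnorm : ‖Complex.I * ((b / x : ℝ) : ℂ)‖ = |b| / |x| := by simp
  have := Complex.norm_exp_sub_one_sub_id_le (hnorm ▸ div_le_one_of_le₀ h (abs_nonneg x))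
  rwa [hnorm, div_pow, sq_abs, sq_abs] at this

lemma intervalIntegrable_oscKernel (b u v : ℝ) : IntervalIntegrable (oscKernel b) volume u v :=
  (intervalIntegrable_const (c := (2 : ℝ))).mono_fun
    (measurable_oscKernel b).aestronglyMeasurable
    (ae_of_all _ fun x => (norm_oscKernel_le_two b x).trans (by simp))

lemma norm_integral_oscKernel_zero_le (b : ℝ) {m : ℝ} (hm : 0 ≤ m) :
    ‖∫ x in 0..m, oscKernel b x‖ ≤ 2 * m := by
  simpa [abs_of_nonneg hm] using
    intervalIntegral.norm_integral_le_of_norm_le_const (a := 0) (b := m)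
      fun x _ => norm_oscKernel_le_two b x

lemma integral_inv_sq_of_pos {u v : ℝ} (hu : 0 < u) (huv : u ≤ v) :
    ∫ x in u..v, (x ^ 2)⁻¹ = u⁻¹ - v⁻¹ := by
  have h0 : (0 : ℝ) ∉ uIcc u v := by
    rw [uIcc_of_le huv]; exact fun h => hu.not_ge h.1
  have := integral_zpow (a := u) (b := v) (n := -2) (Or.inr ⟨by norm_num, h0⟩)
  simp only [zpow_neg, zpow_ofNat] at this
  rw [this]; norm_num; ring

lemma norm_integral_oscKernel_sub_le {b : ℝ} (hb0 : b ≠ 0) (hb1 : |b| ≤ 1) :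
    ‖∫ x in |b|..1, (oscKernel b x - Complex.I * ((b / x : ℝ) : ℂ))‖ ≤ |b| := by
  have hm : 0 < |b| := abs_pos.2 hb0
  have hbound : ∀ᵐ x, x ∈ Ioc |b| 1 →
      ‖oscKernel b x - Complex.I * ((b / x : ℝ) : ℂ)‖ ≤ b ^ 2 * (x ^ 2)⁻¹ :=
    ae_of_all _ fun x hx => by
      rw [← div_eq_mul_inv]
      exact norm_oscKernel_sub_le (hx.1.le.trans (le_abs_self x))
  have hint : IntervalIntegrable (fun x : ℝ => b ^ 2 * (x ^ 2)⁻¹) volume |b| 1 := by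
    refine (intervalIntegral.intervalIntegrable_inv (fun x hx => ?_) (by fun_prop)).const_mul _
    rw [uIcc_of_le hb1] at hx
    exact pow_ne_zero 2 (hm.trans_le hx.1).ne'
  calc ‖∫ x in |b|..1, (oscKernel b x - Complex.I * ((b / x : ℝ) : ℂ))‖
      ≤ ∫ x in |b|..1, b ^ 2 * (x ^ 2)⁻¹ :=
        intervalIntegral.norm_integral_le_of_norm_le hb1 hbound hint
    _ = |b| - b ^ 2 := by
      rw [intervalIntegral.integral_const_mul, integral_inv_sq_of_pos hm hb1, ← sq_abs]
      field_simp
    _ ≤ |b| := by nlinarith [sq_nonneg b]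

lemma integral_I_mul_div {b m : ℝ} (hm : 0 < m) :
    ∫ x in m..1, Complex.I * ((b / x : ℝ) : ℂ) = -(Complex.I * b * Real.log m) := by
  simp_rw [div_eq_mul_inv, Complex.ofReal_mul]
  rw [intervalIntegral.integral_const_mul, intervalIntegral.integral_const_mul,
    intervalIntegral.integral_ofReal, integral_inv_of_pos hm one_pos, one_div, Real.log_inv]
  push_cast; ring

theorem norm_integral_oscKernel_add_le {b : ℝ} (hb1 : |b| ≤ 1) :
    ‖(∫ x in 0..1, oscKernel b x) + Complex.I * b * Real.log |b|‖ ≤ 3 * |b| := by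
  rcases eq_or_ne b 0 with rfl | hb0
  · simp [oscKernel]
  have hm : 0 < |b| := abs_pos.2 hb0
  have hlin : IntervalIntegrable (fun x => Complex.I * ((b / x : ℝ) : ℂ)) volume |b| 1 := by
    refine ContinuousOn.intervalIntegrable fun x hx => ?_
    rw [uIcc_of_le hb1] at hx
    have : x ≠ 0 := (hm.trans_le hx.1).ne'
    fun_prop (disch := assumption)
  have hsplit : (∫ x in 0..1, oscKernel b x) + Complex.I * b * Real.log |b|
      = (∫ x in 0..|b|, oscKernel b x)
        + ∫ x in |b|..1, (oscKernel b x - Complex.I * ((b / x : ℝ) : ℂ)) := by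
    rw [← intervalIntegral.integral_add_adjacent_intervals (intervalIntegrable_oscKernel b 0 |b|)
      (intervalIntegrable_oscKernel b |b| 1),
      intervalIntegral.integral_sub (intervalIntegrable_oscKernel b _ _) hlin,
      integral_I_mul_div hm]
    ring
  calc _ ≤ 2 * |b| + |b| := by
        rw [hsplit]
        exact (norm_add_le _ _).trans (add_le_add (norm_integral_oscKernel_zero_le b hm.le)
          (norm_integral_oscKernel_sub_le hb0 hb1))
    _ = 3 * |b| := by ring

lemma norm_oscKernel_mul_sub_le {f : ℝ → ℝ} {K : NNReal} (hf : LipschitzOnWith K f (Icc 0 1))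
    (b : ℝ) {x : ℝ} (hx : x ∈ Ioc 0 1) :
    ‖oscKernel b x * ((f x - f 0 : ℝ) : ℂ)‖ ≤ K * |b| := by
  have hf_sub : |f x - f 0| ≤ K * x := by
    simpa [Real.dist_eq, abs_of_pos hx.1] using
      hf.dist_le_mul x (Ioc_subset_Icc_self hx) 0 (left_mem_Icc.2 zero_le_one)
  calc ‖oscKernel b x * ((f x - f 0 : ℝ) : ℂ)‖ ≤ |b| / x * (K * x) := by
        rw [norm_mul, Complex.norm_real, Real.norm_eq_abs]
        exact mul_le_mul ((norm_oscKernel_le b x).trans_eq (by rw [abs_of_pos hx.1])) hf_sub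
          (abs_nonneg _) (div_nonneg (abs_nonneg b) hx.1.le)
    _ = K * |b| := by field_simp [hx.1.ne']

theorem norm_integral_oscKernel_mul_add_le {f : ℝ → ℝ} {K : NNReal}
    (hf : LipschitzOnWith K f (Icc 0 1)) {b : ℝ} (hb1 : |b| ≤ 1) :
    ‖(∫ x in 0..1, oscKernel b x * f x) + Complex.I * f 0 * b * Real.log |b|‖
      ≤ (3 * |f 0| + K) * |b| := by
  have hsub_int :
      IntervalIntegrable (fun x => oscKernel b x * ((f x - f 0 : ℝ) : ℂ)) volume 0 1 := by
    rw [intervalIntegrable_iff_integrableOn_Ioc_of_le zero_le_one]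
    refine Integrable.mono' (integrableOn_const measure_Ioc_lt_top.ne (C := (K * |b| : ℝ))) ?_
      ((ae_restrict_iff' measurableSet_Ioc).2
        (ae_of_all _ fun x => norm_oscKernel_mul_sub_le hf b))
    exact (measurable_oscKernel b).aestronglyMeasurable.mul
      ((Complex.continuous_ofReal.comp_continuousOn
        ((hf.continuousOn.sub continuousOn_const).mono Ioc_subset_Icc_self)).aestronglyMeasurable
        measurableSet_Ioc)
  have hsplit : (∫ x in 0..1, oscKernel b x * f x) + Complex.I * f 0 * b * Real.log |b|
      = f 0 * ((∫ x in 0..1, oscKernel b x) + Complex.I * b * Real.log |b|)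
        + ∫ x in 0..1, oscKernel b x * ((f x - f 0 : ℝ) : ℂ) := by
    have : ∫ x in 0..1, oscKernel b x * f x
        = ∫ x in 0..1, (f 0 * oscKernel b x + oscKernel b x * ((f x - f 0 : ℝ) : ℂ)) := by
      congr 1; ext x; push_cast; ring
    rw [this, intervalIntegral.integral_add ((intervalIntegrable_oscKernel b 0 1).const_mul _)
      hsub_int, intervalIntegral.integral_const_mul]
    ring
  have hrest : ‖∫ x in 0..1, oscKernel b x * ((f x - f 0 : ℝ) : ℂ)‖ ≤ K * |b| := by
    simpa using intervalIntegral.norm_integral_le_of_norm_le_const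
      (a := 0) (b := 1) fun x hx =>
        norm_oscKernel_mul_sub_le hf b (uIoc_of_le (zero_le_one (α := ℝ)) ▸ hx)
  calc _ ≤ |f 0| * (3 * |b|) + K * |b| := by
        rw [hsplit]
        refine (norm_add_le _ _).trans (add_le_add ?_ hrest)
        rw [norm_mul, Complex.norm_real, Real.norm_eq_abs]
        exact mul_le_mul_of_nonneg_left (norm_integral_oscKernel_add_le hb1) (abs_nonneg _)
    _ = (3 * |f 0| + K) * |b| := by ring

lemma ofReal_abs_mul_cexp_sign (a : ℝ) :
    ((|a| : ℝ) : ℂ) * Complex.exp (-(Real.pi : ℂ) * Complex.I * (Real.sign a : ℂ) / 2)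
      = -Complex.I * a := by
  rcases lt_trichotomy a 0 with ha | rfl | ha
  · rw [Real.sign_of_neg ha, abs_of_neg ha,
      show -(Real.pi : ℂ) * Complex.I * ((-1 : ℝ) : ℂ) / 2 = Real.pi / 2 * Complex.I by
        push_cast; ring, Complex.exp_pi_div_two_mul_I]
    push_cast; ring
  · simp
  · rw [Real.sign_of_pos ha, abs_of_pos ha,
      show -(Real.pi : ℂ) * Complex.I * ((1 : ℝ) : ℂ) / 2 = -Real.pi / 2 * Complex.I by
        push_cast; ring, Complex.exp_neg_pi_div_two_mul_I]
    ring

theorem norm_integral_oscKernel_mul_sub_log_le {f : ℝ → ℝ} {K : NNReal}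
    (hf : LipschitzOnWith K f (Icc 0 1)) {a t : ℝ} (ht : 0 < t) (ht1 : t < 1)
    (hta : t * |a| ≤ 1) :
    ‖(∫ x in 0..1, oscKernel (t * a) x * f x)
        - Complex.I * f 0 * a * (t * |Real.log t| : ℝ)‖
      ≤ ((3 * |f 0| + K) * |a| + |f 0| * |a| * |Real.log (|a|)|) * t := by
  have hb : |t * a| = t * |a| := by rw [abs_mul, abs_of_pos ht]
  have hlog : t * a * Real.log |t * a| = t * a * (Real.log t + Real.log |a|) := by
    rcases eq_or_ne a 0 with rfl | ha
    · simp
    rw [hb, Real.log_mul ht.ne' (abs_ne_zero.2 ha)]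
  calc _ = ‖((∫ x in 0..1, oscKernel (t * a) x * f x)
        + Complex.I * f 0 * (t * a : ℝ) * Real.log |t * a|)
        - Complex.I * f 0 * (t * a * Real.log |a| : ℝ)‖ := by
        rw [abs_of_neg (Real.log_neg ht ht1)]
        have := congrArg (fun r : ℝ => Complex.I * f 0 * (r : ℂ)) hlog
        push_cast at this ⊢
        congr 1
        linear_combination -this
    _ ≤ (3 * |f 0| + K) * |t * a| + |f 0| * (t * |a| * |Real.log (|a|)|) := by
        refine (norm_sub_le _ _).trans
          (add_le_add (norm_integral_oscKernel_mul_add_le hf (hb ▸ hta)) ?_)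
        simp [abs_of_pos ht]
    _ = _ := by rw [hb]; ring

theorem stmt_18_general (f : ℝ → ℝ) (hf : ContDiffOn ℝ 1 f (Set.Icc 0 1))
    (a : ℝ)
    (ε : ℝ) (hε : ε ∈ Set.Ioo (0:ℝ) 1) :
    ∃ C > (0:ℝ), ∃ t₀ > (0:ℝ), ∀ t : ℝ, 0 < t → t < t₀ →
    ‖(∫ x in Set.Ioo (0:ℝ) 1,
          (Complex.exp (Complex.I * (t : ℂ) * ((a / x : ℝ) : ℂ)) - 1) * (f x : ℂ)) -
        (-(f 0 : ℂ) * (|a| : ℝ) *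
            Complex.exp (-(Real.pi : ℂ) * Complex.I * (Real.sign a : ℂ) / 2)) *
          ((t * |Real.log t| : ℝ) : ℂ)‖ ≤
      C * t * |Real.log t| ^ ε := by
  obtain ⟨K, hK⟩ := hf.exists_lipschitzOnWith one_ne_zero (convex_Icc 0 1) isCompact_Icc
  set C := (3 * |f 0| + K) * |a| + |f 0| * |a| * |Real.log (|a|)|
  refine ⟨C + 1, by positivity, min (Real.exp (-1)) (|a| + 1)⁻¹, by positivity,
    fun t ht htt₀ => ?_⟩
  have hta : t * |a| ≤ 1 := by
    have h := mul_lt_mul_of_pos_right (htt₀.trans_le (min_le_right _ _))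
      (by positivity : 0 < |a| + 1)
    rw [inv_mul_cancel₀ (by positivity)] at h
    nlinarith
  have hlog_t : Real.log t ≤ -1 := by
    simpa using Real.log_le_log ht (htt₀.trans_le (min_le_left _ _)).le
  have hint : (∫ x in Set.Ioo (0:ℝ) 1,
      (Complex.exp (Complex.I * (t : ℂ) * ((a / x : ℝ) : ℂ)) - 1) * (f x : ℂ))
      = ∫ x in 0..1, oscKernel (t * a) x * f x := by
    rw [intervalIntegral.integral_of_le zero_le_one, integral_Ioc_eq_integral_Ioo]
    congr 1; ext x; simp only [oscKernel]; push_cast; ring_nf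
  rw [hint, mul_assoc (-(f 0 : ℂ)), ofReal_abs_mul_cexp_sign]
  calc _ ≤ C * t := by
        convert norm_integral_oscKernel_mul_sub_log_le hK ht
          ((Real.log_neg_iff ht).1 (by linarith)) hta using 4
        ring
    _ ≤ (C + 1) * t * 1 := by linarith
    _ ≤ (C + 1) * t * |Real.log t| ^ ε := by
        refine mul_le_mul_of_nonneg_left (Real.one_le_rpow ?_ hε.1.le) (by positivity)
        rw [abs_of_neg (by linarith : Real.log t < 0)]
        linarith

theorem stmt_18 (f : ℝ → ℝ) (hf : ContDiffOn ℝ 1 f (Set.Icc 0 1))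
    (hf0 : ∀ x ∈ Set.Icc (0:ℝ) 1, 0 ≤ f x)
    (hprob : ∫ x in Set.Ioo (0:ℝ) 1, f x = 1)
    (a : ℝ) (ha : a ≠ 0)
    (ε : ℝ) (hε : ε ∈ Set.Ioo (0:ℝ) 1) :
    ∃ C > (0:ℝ), ∃ t₀ > (0:ℝ), ∀ t : ℝ, 0 < t → t < t₀ →
    ‖(∫ x in Set.Ioo (0:ℝ) 1,
          (Complex.exp (Complex.I * (t : ℂ) * ((a / x : ℝ) : ℂ)) - 1) * (f x : ℂ)) -
        (-(f 0 : ℂ) * (|a| : ℝ) *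
            Complex.exp (-(Real.pi : ℂ) * Complex.I * (Real.sign a : ℂ) / 2)) *
          ((t * |Real.log t| : ℝ) : ℂ)‖ ≤
      C * t * |Real.log t| ^ ε :=
  stmt_18_general f hf a ε hε
end
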